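/- Let k > 0 and let (ξ₁, η₁) ∈ ℝ² be fixed. Then the function (ξ, η) ↦ u_k(ξ, η, ξ₁, η₁) satisfies (∂²u_k/∂ξ²)(ξ, η, ξ₁, η₁) + (∂²u_k/∂η²)(ξ, η, ξ₁, η₁) + k²(cosh²ξ − cos²η)·u_k(ξ, η, ξ₁, η₁) = 0 for every (ξ, η) ∈ ℝ², where the derivatives are taken with respect to the first two arguments. -/

import Mathlib

open Real MeasureTheory

noncomputable def J0 (t : ℝ) : ℝ :=
  ∑' m : ℕ, (-1 : ℝ) ^ m * (t / 2) ^ (2 * m) / (Nat.factorial m : ℝ) ^ 2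

noncomputable def Y0 (t : ℝ) : ℝ :=
  (2 / Real.pi) * (Real.log (t / 2) + Real.eulerMascheroniConstant) * J0 t
    - (2 / Real.pi) * ∑' m : ℕ,
        (-1 : ℝ) ^ (m + 1) * (∑ j ∈ Finset.range (m + 1), (1 : ℝ) / (j + 1))
          * (t / 2) ^ (2 * (m + 1)) / (Nat.factorial (m + 1) : ℝ) ^ 2

noncomputable def ellMap (ξ η : ℝ) : EuclideanSpace ℝ (Fin 2) :=
  !₂[Real.cosh ξ * Real.cos η, Real.sinh ξ * Real.sin η]

noncomputable def uBes (k ξ η ξ' η' : ℝ) : ℝ := J0 (k * dist (ellMap ξ η) (ellMap ξ' η'))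

noncomputable def vBes (k ξ η ξ' η' : ℝ) : ℝ := Y0 (k * dist (ellMap ξ η) (ellMap ξ' η'))

noncomputable def circleVec (θ : ℝ) : EuclideanSpace ℝ (Fin 2) :=
  !₂[Real.cos θ, Real.sin θ]

noncomputable def sphMean (f : EuclideanSpace ℝ (Fin 2) → ℝ)
    (p : EuclideanSpace ℝ (Fin 2)) (r : ℝ) : ℝ :=
  (1 / (2 * Real.pi)) * ∫ θ in (-Real.pi)..Real.pi, f (p + r • circleVec θ)

def ellInterior (ξ₀ : ℝ) : Set (EuclideanSpace ℝ (Fin 2)) :=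
  {p | p 0 ^ 2 / Real.cosh ξ₀ ^ 2 + p 1 ^ 2 / Real.sinh ξ₀ ^ 2 < 1}

noncomputable def lap2 (U : EuclideanSpace ℝ (Fin 2) → ℝ) (p : EuclideanSpace ℝ (Fin 2)) : ℝ :=
  ∑ i : Fin 2, iteratedDeriv 2 (fun t : ℝ => U (p + t • EuclideanSpace.single i (1 : ℝ))) 0

namespace UB


noncomputable def aa (m : ℕ) : ℝ := (-1 : ℝ) ^ m / (Nat.factorial m : ℝ) ^ 2

lemma abs_aa (m : ℕ) : |aa m| = 1 / (Nat.factorial m : ℝ) ^ 2 := by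
  have h : (0:ℝ) < (Nat.factorial m : ℝ) ^ 2 := by positivity
  rw [aa, abs_div, abs_pow, abs_neg, abs_one, one_pow, abs_of_pos h]

lemma le_sq {y : ℝ} (h : 1 ≤ y) : y ≤ y ^ 2 := by nlinarith [sq_nonneg (y - 1)]

lemma one_le_fact (m : ℕ) : (1:ℝ) ≤ (Nat.factorial m : ℝ) := by
  exact_mod_cast Nat.one_le_iff_ne_zero.2 (Nat.factorial_ne_zero m)

noncomputable def E (x : ℝ) : ℝ := ∑' m : ℕ, aa m * x ^ m
noncomputable def E1 (x : ℝ) : ℝ := ∑' m : ℕ, aa (m+1) * ((m:ℝ)+1) * x ^ m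
noncomputable def E2 (x : ℝ) : ℝ := ∑' m : ℕ, aa (m+2) * (((m:ℝ)+2) * ((m:ℝ)+1)) * x ^ m

lemma summable_coef {c : ℕ → ℝ} (hc : ∀ m, |c m| ≤ 1 / (Nat.factorial m : ℝ)) (x : ℝ) :
    Summable fun m => c m * x ^ m := by
  apply Summable.of_norm_bounded
    (Real.summable_pow_div_factorial |x|)
  intro m
  rw [Real.norm_eq_abs, abs_mul, abs_pow]
  calc |c m| * |x| ^ m ≤ (1 / (Nat.factorial m : ℝ)) * |x| ^ m := by
        gcongr; exact hc m
    _ = |x| ^ m / (Nat.factorial m : ℝ) := by ring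

lemma coef_E (m : ℕ) : |aa m| ≤ 1 / (Nat.factorial m : ℝ) := by
  rw [abs_aa]
  have h1 := one_le_fact m
  rw [div_le_div_iff₀ (by positivity) (by positivity)]
  nlinarith

lemma coef_E1 (m : ℕ) : |aa (m+1) * ((m:ℝ)+1)| ≤ 1 / (Nat.factorial m : ℝ) := by
  rw [abs_mul, abs_aa, abs_of_pos (by positivity : (0:ℝ) < (m:ℝ)+1)]
  have h1 := one_le_fact m
  have h2 : ((m+1).factorial : ℝ) = ((m:ℝ)+1) * (Nat.factorial m : ℝ) := by
    rw [Nat.factorial_succ]; push_cast; ring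
  rw [h2, div_mul_eq_mul_div, div_le_div_iff₀ (by positivity) (by positivity)]
  have hy : (1:ℝ) ≤ ((m:ℝ)+1) * (Nat.factorial m : ℝ) := by
    nlinarith [Nat.cast_nonneg (α := ℝ) m, mul_nonneg (Nat.cast_nonneg (α := ℝ) m) (le_trans zero_le_one h1)]
  nlinarith [le_sq hy]

lemma coef_E2 (m : ℕ) : |aa (m+2) * (((m:ℝ)+2) * ((m:ℝ)+1))| ≤ 1 / (Nat.factorial m : ℝ) := by
  rw [abs_mul, abs_aa, abs_of_pos (by positivity : (0:ℝ) < ((m:ℝ)+2) * ((m:ℝ)+1))]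
  have h1 := one_le_fact m
  have h2 : ((m+2).factorial : ℝ) = ((m:ℝ)+2) * (((m:ℝ)+1) * (Nat.factorial m : ℝ)) := by
    rw [Nat.factorial_succ, Nat.factorial_succ]; push_cast; ring
  rw [h2, div_mul_eq_mul_div, div_le_div_iff₀ (by positivity) (by positivity)]
  have hy : (1:ℝ) ≤ ((m:ℝ)+2) * (((m:ℝ)+1) * (Nat.factorial m : ℝ)) := by
    nlinarith [Nat.cast_nonneg (α := ℝ) m, mul_nonneg (Nat.cast_nonneg (α := ℝ) m) (le_trans zero_le_one h1), sq_nonneg (m:ℝ)]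
  nlinarith [le_sq hy]

lemma coef_EC (m : ℕ) : |aa (m+1) * (((m:ℝ)+1) * (m:ℝ))| ≤ 1 / (Nat.factorial m : ℝ) := by
  rw [abs_mul, abs_aa, abs_of_nonneg (by positivity : (0:ℝ) ≤ ((m:ℝ)+1) * (m:ℝ))]
  have h1 := one_le_fact m
  have hm : (m:ℝ) ≤ (Nat.factorial m : ℝ) := by exact_mod_cast Nat.self_le_factorial m
  have h2 : ((m+1).factorial : ℝ) = ((m:ℝ)+1) * (Nat.factorial m : ℝ) := by
    rw [Nat.factorial_succ]; push_cast; ring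
  rw [h2, div_mul_eq_mul_div, div_le_div_iff₀ (by positivity) (by positivity)]
  nlinarith [sq_nonneg ((m:ℝ)+1)]

lemma sumE (x : ℝ) : Summable fun m => aa m * x ^ m := summable_coef coef_E x
lemma sumE1 (x : ℝ) : Summable fun m => aa (m+1) * ((m:ℝ)+1) * x ^ m := by
  have := summable_coef coef_E1 x
  exact this.congr fun m => by ring
lemma sumE2 (x : ℝ) : Summable fun m => aa (m+2) * (((m:ℝ)+2) * ((m:ℝ)+1)) * x ^ m := by
  have := summable_coef coef_E2 x
  exact this.congr fun m => by ring
lemma sumEC (x : ℝ) : Summable fun m => aa (m+1) * (((m:ℝ)+1) * (m:ℝ)) * x ^ m := by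
  have := summable_coef coef_EC x
  exact this.congr fun m => by ring

lemma aa_succ (m : ℕ) : aa (m+1) * ((m:ℝ)+1)^2 = - aa m := by
  have h1 : (0:ℝ) < (Nat.factorial m : ℝ) := by positivity
  rw [aa, aa, Nat.factorial_succ]
  push_cast
  field_simp
  ring

lemma ode (x : ℝ) : x * E2 x + E1 x + E x = 0 := by
  have hC : x * E2 x = ∑' m : ℕ, aa (m+1) * (((m:ℝ)+1) * (m:ℝ)) * x ^ m := by
    rw [E2, ← tsum_mul_left, Summable.tsum_eq_zero_add (sumEC x)]
    simp only [Nat.cast_zero, Nat.cast_add, Nat.cast_one]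
    rw [show aa (0+1) * (((0:ℝ)+1) * 0) * x ^ 0 = 0 by ring, zero_add]
    exact tsum_congr fun m => by push_cast; ring
  rw [hC, E1, E]
  rw [← Summable.tsum_add (sumEC x) (sumE1 x), ← Summable.tsum_add ((sumEC x).add (sumE1 x)) (sumE x)]
  have h0 : (fun m : ℕ => aa (m+1) * (((m:ℝ)+1) * (m:ℝ)) * x ^ m + aa (m+1) * ((m:ℝ)+1) * x ^ m
      + aa m * x ^ m) = fun _ => (0:ℝ) :=
    funext fun m => by linear_combination x ^ m * aa_succ m
  rw [h0, tsum_zero]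



-- bound for termwise derivative of E-series on a ball of radius R
lemma bound_dE {R : ℝ} (hR : 0 ≤ R) (m : ℕ) {y : ℝ} (hy : |y| ≤ R) :
    ‖aa m * ((m:ℝ) * y ^ (m-1))‖ ≤ (R+1) ^ m / (Nat.factorial m : ℝ) := by
  have h1 := one_le_fact m
  rw [Real.norm_eq_abs, abs_mul, abs_mul, abs_aa, abs_pow]
  have hyR : |y| ^ (m-1) ≤ (R+1) ^ m := by
    calc |y| ^ (m-1) ≤ (R+1) ^ (m-1) := by
          apply pow_le_pow_left₀ (abs_nonneg y); linarith
      _ ≤ (R+1) ^ m := pow_le_pow_right₀ (by linarith) (Nat.sub_le m 1)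
  have hcoef : 1 / (Nat.factorial m : ℝ) ^ 2 * |(m:ℝ)| ≤ 1 / (Nat.factorial m : ℝ) := by
    rw [abs_of_nonneg (Nat.cast_nonneg m)]
    have hm : (m:ℝ) ≤ (Nat.factorial m : ℝ) := by exact_mod_cast Nat.self_le_factorial m
    rw [div_mul_eq_mul_div, one_mul, div_le_div_iff₀ (by positivity) (by positivity)]
    nlinarith
  rw [← mul_assoc]
  calc 1 / (Nat.factorial m : ℝ) ^ 2 * |(m:ℝ)| * |y| ^ (m-1)
      ≤ (1 / (Nat.factorial m : ℝ)) * ((R+1) ^ m) := by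
        apply mul_le_mul hcoef hyR (by positivity) (by positivity)
    _ = (R+1) ^ m / (Nat.factorial m : ℝ) := by ring

lemma hasDerivAt_E (x : ℝ) : HasDerivAt E (E1 x) x := by
  set R : ℝ := |x| + 1 with hRdef
  have hR0 : (0:ℝ) ≤ R := by positivity
  have hxR : x ∈ Metric.ball (0:ℝ) R := by
    simp [Real.dist_eq, hRdef]
  have hu : Summable fun m : ℕ => (R+1) ^ m / (Nat.factorial m : ℝ) :=
    Real.summable_pow_div_factorial (R+1)
  have hg : ∀ m : ℕ, ∀ y ∈ Metric.ball (0:ℝ) R,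
      HasDerivAt (fun z => aa m * z ^ m) (aa m * ((m:ℝ) * y ^ (m-1))) y :=
    fun m y _ => (hasDerivAt_pow m y).const_mul (aa m)
  have hg' : ∀ m : ℕ, ∀ y ∈ Metric.ball (0:ℝ) R,
      ‖aa m * ((m:ℝ) * y ^ (m-1))‖ ≤ (R+1) ^ m / (Nat.factorial m : ℝ) := by
    intro m y hy
    apply bound_dE hR0 m
    have : |y| < R := by simpa [Real.dist_eq] using hy
    linarith
  have main := hasDerivAt_tsum_of_isPreconnected hu Metric.isOpen_ball
    (convex_ball (0:ℝ) R).isPreconnected hg hg' hxR (sumE x) hxR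
  have hsum' : Summable fun m : ℕ => aa m * ((m:ℝ) * x ^ (m-1)) := by
    apply Summable.of_norm_bounded hu
    intro m; exact bound_dE hR0 m (by rw [hRdef]; linarith)
  have heq : (∑' m : ℕ, aa m * ((m:ℝ) * x ^ (m-1))) = E1 x := by
    rw [Summable.tsum_eq_zero_add hsum']
    simp only [Nat.cast_zero, zero_mul, mul_zero, zero_add]
    rw [E1]
    exact tsum_congr fun m => by push_cast; ring
  rw [heq] at main
  exact main



lemma bound_dE1 {R : ℝ} (hR : 0 ≤ R) (m : ℕ) {y : ℝ} (hy : |y| ≤ R) :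
    ‖aa (m+1) * ((m:ℝ)+1) * ((m:ℝ) * y ^ (m-1))‖ ≤ (R+1) ^ m / (Nat.factorial m : ℝ) := by
  have h1 := one_le_fact m
  rw [Real.norm_eq_abs, abs_mul, abs_mul, abs_mul, abs_aa, abs_pow]
  have hyR : |y| ^ (m-1) ≤ (R+1) ^ m := by
    calc |y| ^ (m-1) ≤ (R+1) ^ (m-1) := by
          apply pow_le_pow_left₀ (abs_nonneg y); linarith
      _ ≤ (R+1) ^ m := pow_le_pow_right₀ (by linarith) (Nat.sub_le m 1)
  have hcoef : 1 / (Nat.factorial (m+1) : ℝ) ^ 2 * |(m:ℝ)+1| * |(m:ℝ)| ≤ 1 / (Nat.factorial m : ℝ) := by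
    rw [abs_of_nonneg (by positivity : (0:ℝ) ≤ (m:ℝ)+1), abs_of_nonneg (Nat.cast_nonneg (α := ℝ) m)]
    have hm : (m:ℝ) ≤ (Nat.factorial m : ℝ) := by exact_mod_cast Nat.self_le_factorial m
    have h2 : ((m+1).factorial : ℝ) = ((m:ℝ)+1) * (Nat.factorial m : ℝ) := by
      rw [Nat.factorial_succ]; push_cast; ring
    rw [h2, div_mul_eq_mul_div, div_mul_eq_mul_div, div_le_div_iff₀ (by positivity) (by positivity)]
    nlinarith [sq_nonneg ((m:ℝ)+1), Nat.cast_nonneg (α := ℝ) m]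
  rw [mul_assoc (1 / (Nat.factorial (m+1) : ℝ) ^ 2) _ _, ← mul_assoc, ← mul_assoc]
  calc 1 / (Nat.factorial (m+1) : ℝ) ^ 2 * |(m:ℝ)+1| * |(m:ℝ)| * |y| ^ (m-1)
      ≤ (1 / (Nat.factorial m : ℝ)) * ((R+1) ^ m) :=
        mul_le_mul hcoef hyR (by positivity) (by positivity)
    _ = (R+1) ^ m / (Nat.factorial m : ℝ) := by ring

lemma hasDerivAt_E1 (x : ℝ) : HasDerivAt E1 (E2 x) x := by
  set R : ℝ := |x| + 1 with hRdef
  have hR0 : (0:ℝ) ≤ R := by positivity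
  have hxR : x ∈ Metric.ball (0:ℝ) R := by simp [Real.dist_eq, hRdef]
  have hu : Summable fun m : ℕ => (R+1) ^ m / (Nat.factorial m : ℝ) :=
    Real.summable_pow_div_factorial (R+1)
  have hg : ∀ m : ℕ, ∀ y ∈ Metric.ball (0:ℝ) R,
      HasDerivAt (fun z => aa (m+1) * ((m:ℝ)+1) * z ^ m)
        (aa (m+1) * ((m:ℝ)+1) * ((m:ℝ) * y ^ (m-1))) y :=
    fun m y _ => (hasDerivAt_pow m y).const_mul (aa (m+1) * ((m:ℝ)+1))
  have hg' : ∀ m : ℕ, ∀ y ∈ Metric.ball (0:ℝ) R,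
      ‖aa (m+1) * ((m:ℝ)+1) * ((m:ℝ) * y ^ (m-1))‖ ≤ (R+1) ^ m / (Nat.factorial m : ℝ) := by
    intro m y hy
    apply bound_dE1 hR0 m
    have : |y| < R := by simpa [Real.dist_eq] using hy
    linarith
  have main := hasDerivAt_tsum_of_isPreconnected hu Metric.isOpen_ball
    (convex_ball (0:ℝ) R).isPreconnected hg hg' hxR (sumE1 x) hxR
  have hsum' : Summable fun m : ℕ => aa (m+1) * ((m:ℝ)+1) * ((m:ℝ) * x ^ (m-1)) := by
    apply Summable.of_norm_bounded hu
    intro m; exact bound_dE1 hR0 m (by rw [hRdef]; linarith)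
  have heq : (∑' m : ℕ, aa (m+1) * ((m:ℝ)+1) * ((m:ℝ) * x ^ (m-1))) = E2 x := by
    rw [Summable.tsum_eq_zero_add hsum']
    simp only [Nat.cast_zero, zero_mul, mul_zero, zero_add]
    rw [E2]
    exact tsum_congr fun m => by push_cast; ring
  rw [heq] at main
  exact main

noncomputable def Wf (k a b p q : ℝ) : ℝ :=
  k^2/4 * ((Real.cosh p * Real.cos q - a)^2 + (Real.sinh p * Real.sin q - b)^2)
noncomputable def W₁ (k a b p q : ℝ) : ℝ :=
  k^2/4 * (2 * (Real.cosh p * Real.cos q - a) * (Real.sinh p * Real.cos q)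
    + 2 * (Real.sinh p * Real.sin q - b) * (Real.cosh p * Real.sin q))
noncomputable def W₁₁ (k a b p q : ℝ) : ℝ :=
  k^2/4 * ((2 * (Real.sinh p * Real.cos q) * (Real.sinh p * Real.cos q)
      + 2 * (Real.cosh p * Real.cos q - a) * (Real.cosh p * Real.cos q))
    + (2 * (Real.cosh p * Real.sin q) * (Real.cosh p * Real.sin q)
      + 2 * (Real.sinh p * Real.sin q - b) * (Real.sinh p * Real.sin q)))
noncomputable def W₂ (k a b p q : ℝ) : ℝ :=
  k^2/4 * (2 * (Real.cosh p * Real.cos q - a) * (-(Real.cosh p * Real.sin q))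
    + 2 * (Real.sinh p * Real.sin q - b) * (Real.sinh p * Real.cos q))
noncomputable def W₂₂ (k a b p q : ℝ) : ℝ :=
  k^2/4 * ((2 * (-(Real.cosh p * Real.sin q)) * (-(Real.cosh p * Real.sin q))
      + 2 * (Real.cosh p * Real.cos q - a) * (-(Real.cosh p * Real.cos q)))
    + (2 * (Real.sinh p * Real.cos q) * (Real.sinh p * Real.cos q)
      + 2 * (Real.sinh p * Real.sin q - b) * (-(Real.sinh p * Real.sin q))))

lemma hasDerivAt_W1 (k a b q p : ℝ) : HasDerivAt (fun s => Wf k a b s q) (W₁ k a b p q) p := by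
  have h1 : HasDerivAt (fun s => (Real.cosh s * Real.cos q - a)^2)
      (2 * (Real.cosh p * Real.cos q - a) * (Real.sinh p * Real.cos q)) p := by
    have := (((Real.hasDerivAt_cosh p).mul_const (Real.cos q)).sub_const a).fun_pow 2
    exact this.congr_deriv (by push_cast; ring)
  have h2 : HasDerivAt (fun s => (Real.sinh s * Real.sin q - b)^2)
      (2 * (Real.sinh p * Real.sin q - b) * (Real.cosh p * Real.sin q)) p := by
    have := (((Real.hasDerivAt_sinh p).mul_const (Real.sin q)).sub_const b).fun_pow 2
    exact this.congr_deriv (by push_cast; ring)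
  simpa [Wf, W₁, mul_add] using (h1.add h2).const_mul (k^2/4)

lemma hasDerivAt_W11 (k a b q p : ℝ) : HasDerivAt (fun s => W₁ k a b s q) (W₁₁ k a b p q) p := by
  have h1 : HasDerivAt (fun s => 2 * (Real.cosh s * Real.cos q - a) * (Real.sinh s * Real.cos q))
      (2 * (Real.sinh p * Real.cos q) * (Real.sinh p * Real.cos q)
        + 2 * (Real.cosh p * Real.cos q - a) * (Real.cosh p * Real.cos q)) p := by
    have := ((((Real.hasDerivAt_cosh p).mul_const (Real.cos q)).sub_const a).const_mul 2).fun_mul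
      ((Real.hasDerivAt_sinh p).mul_const (Real.cos q))
    exact this.congr_deriv (by ring)
  have h2 : HasDerivAt (fun s => 2 * (Real.sinh s * Real.sin q - b) * (Real.cosh s * Real.sin q))
      (2 * (Real.cosh p * Real.sin q) * (Real.cosh p * Real.sin q)
        + 2 * (Real.sinh p * Real.sin q - b) * (Real.sinh p * Real.sin q)) p := by
    have := ((((Real.hasDerivAt_sinh p).mul_const (Real.sin q)).sub_const b).const_mul 2).fun_mul
      ((Real.hasDerivAt_cosh p).mul_const (Real.sin q))
    exact this.congr_deriv (by ring)
  simpa [W₁, W₁₁, mul_add] using (h1.add h2).const_mul (k^2/4)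

lemma hasDerivAt_W2 (k a b p q : ℝ) : HasDerivAt (fun t => Wf k a b p t) (W₂ k a b p q) q := by
  have h1 : HasDerivAt (fun t => (Real.cosh p * Real.cos t - a)^2)
      (2 * (Real.cosh p * Real.cos q - a) * (-(Real.cosh p * Real.sin q))) q := by
    have := (((Real.hasDerivAt_cos q).const_mul (Real.cosh p)).sub_const a).fun_pow 2
    exact this.congr_deriv (by push_cast; ring)
  have h2 : HasDerivAt (fun t => (Real.sinh p * Real.sin t - b)^2)
      (2 * (Real.sinh p * Real.sin q - b) * (Real.sinh p * Real.cos q)) q := by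
    have := (((Real.hasDerivAt_sin q).const_mul (Real.sinh p)).sub_const b).fun_pow 2
    exact this.congr_deriv (by push_cast; ring)
  simpa [Wf, W₂, mul_add] using (h1.add h2).const_mul (k^2/4)

lemma hasDerivAt_W22 (k a b p q : ℝ) : HasDerivAt (fun t => W₂ k a b p t) (W₂₂ k a b p q) q := by
  have h1 : HasDerivAt (fun t => 2 * (Real.cosh p * Real.cos t - a) * (-(Real.cosh p * Real.sin t)))
      (2 * (-(Real.cosh p * Real.sin q)) * (-(Real.cosh p * Real.sin q))
        + 2 * (Real.cosh p * Real.cos q - a) * (-(Real.cosh p * Real.cos q))) q := by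
    have := ((((Real.hasDerivAt_cos q).const_mul (Real.cosh p)).sub_const a).const_mul 2).fun_mul
      (((Real.hasDerivAt_sin q).const_mul (Real.cosh p)).fun_neg)
    exact this.congr_deriv (by ring)
  have h2 : HasDerivAt (fun t => 2 * (Real.sinh p * Real.sin t - b) * (Real.sinh p * Real.cos t))
      (2 * (Real.sinh p * Real.cos q) * (Real.sinh p * Real.cos q)
        + 2 * (Real.sinh p * Real.sin q - b) * (-(Real.sinh p * Real.sin q))) q := by
    have := ((((Real.hasDerivAt_sin q).const_mul (Real.sinh p)).sub_const b).const_mul 2).fun_mul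
      ((Real.hasDerivAt_cos q).const_mul (Real.sinh p))
    exact this.congr_deriv (by ring)
  simpa [W₂, W₂₂, mul_add] using (h1.add h2).const_mul (k^2/4)

lemma uBes_eq (k ξ η ξ' η' : ℝ) :
    uBes k ξ η ξ' η' = E (Wf k (Real.cosh ξ' * Real.cos η') (Real.sinh ξ' * Real.sin η') ξ η) := by
  have hd2 : dist (ellMap ξ η) (ellMap ξ' η') ^ 2
      = (Real.cosh ξ * Real.cos η - Real.cosh ξ' * Real.cos η')^2
        + (Real.sinh ξ * Real.sin η - Real.sinh ξ' * Real.sin η')^2 := by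
    rw [EuclideanSpace.dist_eq, Real.sq_sqrt (Finset.sum_nonneg fun i _ => sq_nonneg _)]
    simp [Fin.sum_univ_two, ellMap, Real.dist_eq, sq_abs]
  have hJ : ∀ t : ℝ, J0 t = E ((t/2)^2) := by
    intro t
    rw [J0, E]
    exact tsum_congr fun m => by rw [aa, pow_mul]; ring
  rw [uBes, hJ, Wf, ← hd2]
  congr 1
  ring


end UB

open UB in
theorem uBes_solves_elliptical_helmholtz
    (k : ℝ) (hk : 0 < k) (ξ₁ η₁ ξ η : ℝ) :
    iteratedDeriv 2 (fun s => uBes k s η ξ₁ η₁) ξ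
      + iteratedDeriv 2 (fun t => uBes k ξ t ξ₁ η₁) η
      + k ^ 2 * (Real.cosh ξ ^ 2 - Real.cos η ^ 2) * uBes k ξ η ξ₁ η₁ = 0 := by
  set a := Real.cosh ξ₁ * Real.cos η₁ with ha
  set b := Real.sinh ξ₁ * Real.sin η₁ with hb
  have hrep : ∀ p q : ℝ, uBes k p q ξ₁ η₁ = E (Wf k a b p q) := fun p q => uBes_eq k p q ξ₁ η₁
  -- first variable
  have hu1 : ∀ p : ℝ, HasDerivAt (fun s => E (Wf k a b s η)) (E1 (Wf k a b p η) * W₁ k a b p η) p :=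
    fun p => (hasDerivAt_E (Wf k a b p η)).comp (h := fun s => Wf k a b s η) p (hasDerivAt_W1 k a b η p)
  have hu11 : HasDerivAt (fun p => E1 (Wf k a b p η) * W₁ k a b p η)
      ((E2 (Wf k a b ξ η) * W₁ k a b ξ η) * W₁ k a b ξ η
        + E1 (Wf k a b ξ η) * W₁₁ k a b ξ η) ξ :=
    ((hasDerivAt_E1 (Wf k a b ξ η)).comp (h := fun s => Wf k a b s η) ξ (hasDerivAt_W1 k a b η ξ)).fun_mul (hasDerivAt_W11 k a b η ξ)
  have hIter1 : iteratedDeriv 2 (fun s => uBes k s η ξ₁ η₁) ξ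
      = (E2 (Wf k a b ξ η) * W₁ k a b ξ η) * W₁ k a b ξ η
        + E1 (Wf k a b ξ η) * W₁₁ k a b ξ η := by
    have hfun : (fun s => uBes k s η ξ₁ η₁) = fun s => E (Wf k a b s η) :=
      funext fun p => hrep p η
    rw [hfun, iteratedDeriv_succ, iteratedDeriv_one]
    have hd : deriv (fun s => E (Wf k a b s η)) = fun p => E1 (Wf k a b p η) * W₁ k a b p η :=
      funext fun p => (hu1 p).deriv
    rw [hd]
    exact hu11.deriv
  -- second variable
  have hu2 : ∀ q : ℝ, HasDerivAt (fun t => E (Wf k a b ξ t)) (E1 (Wf k a b ξ q) * W₂ k a b ξ q) q :=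
    fun q => (hasDerivAt_E (Wf k a b ξ q)).comp (h := fun t => Wf k a b ξ t) q (hasDerivAt_W2 k a b ξ q)
  have hu22 : HasDerivAt (fun q => E1 (Wf k a b ξ q) * W₂ k a b ξ q)
      ((E2 (Wf k a b ξ η) * W₂ k a b ξ η) * W₂ k a b ξ η
        + E1 (Wf k a b ξ η) * W₂₂ k a b ξ η) η :=
    ((hasDerivAt_E1 (Wf k a b ξ η)).comp (h := fun t => Wf k a b ξ t) η (hasDerivAt_W2 k a b ξ η)).fun_mul (hasDerivAt_W22 k a b ξ η)
  have hIter2 : iteratedDeriv 2 (fun t => uBes k ξ t ξ₁ η₁) η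
      = (E2 (Wf k a b ξ η) * W₂ k a b ξ η) * W₂ k a b ξ η
        + E1 (Wf k a b ξ η) * W₂₂ k a b ξ η := by
    have hfun : (fun t => uBes k ξ t ξ₁ η₁) = fun t => E (Wf k a b ξ t) :=
      funext fun q => hrep ξ q
    rw [hfun, iteratedDeriv_succ, iteratedDeriv_one]
    have hd : deriv (fun t => E (Wf k a b ξ t)) = fun q => E1 (Wf k a b ξ q) * W₂ k a b ξ q :=
      funext fun q => (hu2 q).deriv
    rw [hd]
    exact hu22.deriv
  rw [hIter1, hIter2, hrep ξ η]
  -- algebra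
  have hH : Real.cosh ξ ^ 2 - Real.cos η ^ 2
      = Real.sinh ξ ^ 2 * Real.cos η ^ 2 + Real.cosh ξ ^ 2 * Real.sin η ^ 2 := by
    linear_combination (1 - Real.sin η ^ 2) * (Real.cosh_sq_sub_sinh_sq ξ)
      - (Real.sinh ξ ^ 2 + 1) * (Real.sin_sq_add_cos_sq η)
  have hsum1 : W₁ k a b ξ η ^ 2 + W₂ k a b ξ η ^ 2
      = k^2 * (Real.sinh ξ ^ 2 * Real.cos η ^ 2 + Real.cosh ξ ^ 2 * Real.sin η ^ 2)
        * Wf k a b ξ η := by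
    rw [W₁, W₂, Wf]; ring
  have hsum2 : W₁₁ k a b ξ η + W₂₂ k a b ξ η
      = k^2 * (Real.sinh ξ ^ 2 * Real.cos η ^ 2 + Real.cosh ξ ^ 2 * Real.sin η ^ 2) := by
    rw [W₁₁, W₂₂]; ring
  rw [hH]
  linear_combination (E2 (Wf k a b ξ η)) * hsum1 + (E1 (Wf k a b ξ η)) * hsum2
    + (k^2 * (Real.sinh ξ ^ 2 * Real.cos η ^ 2 + Real.cosh ξ ^ 2 * Real.sin η ^ 2))
      * (ode (Wf k a b ξ η))
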